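/- arXiv:2412.13515 — 3 statements merged into one kernel-verified Lean document; each statement's English description precedes it below -/
import Mathlib

section
/- Conversely, if μ = Σ_j ω_j π_j is a convex combination of the stationary measures π_j on the closed irreducible classes of the chain with rates R₀, and J = J_{μ,R₀}, then J is divergence-free and I⁽⁰⁾(μ,J) = Σ_{(x,y)∈E₀} Φ(J(x,y), μ(x)R₀(x,y)) = 0. -/
noncomputable def Phi (q p : ℝ) : EReal :=
  if q = 0 then (p : EReal)
  else if p = 0 then ⊤
  else ((q * Real.log (q / p) - (q - p) : ℝ) : EReal)

theorem Phi_self (q : ℝ) : Phi q q = 0 := by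
  by_cases hq : q = 0 <;> simp [Phi, hq]

section Stationary

variable {V ι : Type*} [Fintype V]

def IsStationaryMeasure (R : V → V → ℝ) (μ : V → ℝ) : Prop :=
  ∀ x, ∑ y, μ y * R y x = μ x * ∑ y, R x y

theorem IsStationaryMeasure.linearCombination {R : V → V → ℝ} {π : ι → V → ℝ} (s : Finset ι)
    (hπ : ∀ j ∈ s, IsStationaryMeasure R (π j)) (ω : ι → ℝ) :
    IsStationaryMeasure R (fun x => ∑ j ∈ s, ω j * π j x) := by
  intro x
  calc ∑ y, (∑ j ∈ s, ω j * π j y) * R y x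
      = ∑ j ∈ s, ω j * ∑ y, π j y * R y x := by
        simp only [Finset.sum_mul, Finset.mul_sum, mul_assoc]
        exact Finset.sum_comm
    _ = ∑ j ∈ s, ω j * (π j x * ∑ y, R x y) :=
        Finset.sum_congr rfl fun j hj => by rw [hπ j hj x]
    _ = (∑ j ∈ s, ω j * π j x) * ∑ y, R x y := by
        simp only [Finset.sum_mul, mul_assoc]

theorem IsStationaryMeasure.sum_flux_out_eq_sum_flux_in {R : V → V → ℝ} {μ : V → ℝ}
    (hμ : IsStationaryMeasure R μ) (x : V) :
    ∑ y, μ x * R x y = ∑ y, μ y * R y x := by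
  rw [← Finset.mul_sum, hμ x]

end Stationary

theorem stmt_8_general {V : Type*} [Fintype V] [DecidableEq V]
    (R₀ : V → V → ℝ)
    (n : ℕ)
    -- `π j` is the stationary probability measure of the chain restricted to `𝒱 j`
    (π : Fin n → V → ℝ)
    (hπstat : ∀ j x, ∑ y, π j y * R₀ y x = π j x * ∑ y, R₀ x y)
    -- μ is a convex combination of the π j, and J = J_{μ,R₀}
    (ω : Fin n → ℝ)
    (μ : V → ℝ) (hμ : ∀ x, μ x = ∑ j, ω j * π j x)
    (J : V → V → ℝ) (hJ : ∀ x y, J x y = μ x * R₀ x y) :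
    (∀ x, ∑ y, J x y = ∑ y, J y x) ∧
    ∑ x, ∑ y,
        (if x ≠ y ∧ 0 < R₀ x y then Phi (J x y) (μ x * R₀ x y) else 0)
      = (0 : EReal) := by
  have hμstat : IsStationaryMeasure R₀ μ := by
    rw [funext hμ]
    exact IsStationaryMeasure.linearCombination Finset.univ (fun j _ => hπstat j) ω
  refine ⟨fun x => by simpa only [hJ] using hμstat.sum_flux_out_eq_sum_flux_in x, ?_⟩
  refine Finset.sum_eq_zero fun x _ => Finset.sum_eq_zero fun y _ => ?_
  split_ifs
  · rw [hJ, Phi_self]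
  · rfl

theorem stmt_8 {V : Type*} [Fintype V] [DecidableEq V]
    (R₀ : V → V → ℝ) (hR0 : ∀ x y, 0 ≤ R₀ x y) (hRdiag : ∀ x, R₀ x x = 0)
    (n : ℕ) (𝒱 : Fin n → Finset V)
    (hdisj : ∀ i j, i ≠ j → Disjoint (𝒱 i) (𝒱 j))
    -- each `𝒱 j` is a closed class
    (hclosed : ∀ j, ∀ x ∈ 𝒱 j, ∀ y, y ∉ 𝒱 j → R₀ x y = 0)
    -- `π j` is the stationary probability measure of the chain restricted to `𝒱 j`
    (π : Fin n → V → ℝ)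
    (hπ0 : ∀ j x, 0 ≤ π j x) (hπ1 : ∀ j, ∑ x, π j x = 1)
    (hπsupp : ∀ j x, x ∉ 𝒱 j → π j x = 0)
    (hπstat : ∀ j x, ∑ y, π j y * R₀ y x = π j x * ∑ y, R₀ x y)
    -- μ is a convex combination of the π j, and J = J_{μ,R₀}
    (ω : Fin n → ℝ) (hω0 : ∀ j, 0 ≤ ω j) (hω1 : ∑ j, ω j = 1)
    (μ : V → ℝ) (hμ : ∀ x, μ x = ∑ j, ω j * π j x)
    (J : V → V → ℝ) (hJ : ∀ x y, J x y = μ x * R₀ x y) :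
    (∀ x, ∑ y, J x y = ∑ y, J y x) ∧
    ∑ x, ∑ y,
        (if x ≠ y ∧ 0 < R₀ x y then Phi (J x y) (μ x * R₀ x y) else 0)
      = (0 : EReal) :=
  stmt_8_general R₀ n π hπstat ω μ hμ J hJ
end

section
/- Let (X_t) be the three-state Markov chain on V = {a,b,c} with jump rates R(a,b) = R(b,c) = R(c,a) = 1 and zero otherwise. Then the Donsker–Varadhan rate functional ℐ(μ) = sup_{u>0} −Σ_x μ(x) (ℒu)(x)/u(x) equals 1 − 3(μ_a μ_b μ_c)^{1/3} for every probability measure μ on V. In particular, ℐ coincides with the rate functional of the chain jumping in the reverse cyclic order. -/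
/-!
For a chain jumping along a permutation `σ` at rate `1`, the Donsker–Varadhan objective at `u`
is `1 - ∑ μ x * t x` with `t x = u (σ x) / u x`. For a cyclic `σ` (and hence for `σ⁻¹`) these
ratio vectors are exactly the positive `t` with `∏ t = 1`, so `ℐ(μ) = 1 - inf ∑ μ x * t x`
over that set, independently of the direction of the cycle. Weighted AM–GM bounds the infimum
below by `n (∏ μ)^(1/n)`, `n = card V`; it is attained when `μ > 0`, and approached through
`μ + δ` otherwise.
-/

/-- Donsker–Varadhan rate functional: supremum over strictly positive functions
`u` of `-∑_x μ(x) (ℒu)(x)/u(x)`. -/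
noncomputable def DV {V : Type*} [Fintype V] (R : V → V → ℝ) (μ : V → ℝ) : ℝ :=
  ⨆ u : {u : V → ℝ // ∀ x, 0 < u x},
    -∑ x, μ x * ((∑ y, R x y * (u.1 y - u.1 x)) / u.1 x)

/-- Cyclic chain `a → b → c → a` at rate 1 on `{a,b,c} = {0,1,2}`. -/
noncomputable def Rfwd : Fin 3 → Fin 3 → ℝ := fun x y =>
  if (x, y) = (0, 1) ∨ (x, y) = (1, 2) ∨ (x, y) = (2, 0) then 1 else 0

/-- The reverse cyclic chain `a → c → b → a` at rate 1. -/
noncomputable def Rbwd : Fin 3 → Fin 3 → ℝ := fun x y =>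
  if (x, y) = (1, 0) ∨ (x, y) = (2, 1) ∨ (x, y) = (0, 2) then 1 else 0

open Real Finset Filter Topology

variable {V : Type*} [Fintype V]

def permRate [DecidableEq V] (σ : Equiv.Perm V) : V → V → ℝ := fun x y => if y = σ x then 1 else 0

/-- Holds exactly when `σ` is a single cycle through all of `V`. -/
def RatiosSurjective (σ : Equiv.Perm V) : Prop :=
  ∀ t : V → ℝ, (∀ x, 0 < t x) → ∏ x, t x = 1 →
    ∃ u : V → ℝ, (∀ x, 0 < u x) ∧ ∀ x, u (σ x) / u x = t x

lemma neg_sum_permRate_generator_div [DecidableEq V] (σ : Equiv.Perm V) {μ : V → ℝ}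
    (hμ1 : ∑ x, μ x = 1) {u : V → ℝ} (hu : ∀ x, 0 < u x) :
    -∑ x, μ x * ((∑ y, permRate σ x y * (u y - u x)) / u x)
      = 1 - ∑ x, μ x * (u (σ x) / u x) := by
  have hterm : ∀ x, μ x * ((∑ y, permRate σ x y * (u y - u x)) / u x)
      = μ x * (u (σ x) / u x) - μ x := fun x => by
    simp only [permRate, ite_mul, one_mul, zero_mul, sum_ite_eq', mem_univ, if_true]
    rw [sub_div, div_self (hu x).ne', mul_sub, mul_one]
  simp only [hterm, sum_sub_distrib, hμ1]
  ring

lemma RatiosSurjective.symm {σ : Equiv.Perm V} (hσ : RatiosSurjective σ) :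
    RatiosSurjective σ.symm := by
  intro t ht hprod
  obtain ⟨v, hv, hvt⟩ := hσ (t ∘ σ) (fun x => ht _) (by rwa [Function.comp_def, Equiv.prod_comp σ])
  refine ⟨fun x => (v x)⁻¹, fun x => inv_pos.2 (hv x), fun x => ?_⟩
  have := hvt (σ.symm x)
  simp only [Function.comp_apply, Equiv.apply_symm_apply] at this
  rw [inv_div_inv, this]

lemma ratiosSurjective_finRotate_three : RatiosSurjective (finRotate 3) := by
  intro t ht hprod
  rw [Fin.prod_univ_three] at hprod
  have h0 := (ht 0).ne'
  have h1 := (ht 1).ne'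
  refine ⟨![1, t 0, t 0 * t 1], fun x => ?_, fun x => ?_⟩ <;> fin_cases x <;> simp [ht, h0]
  field_simp
  linear_combination -hprod

variable [Nonempty V]

/-- Weighted AM–GM with weights `1 / card V`, applied to the products `μ x * t x`. -/
lemma card_mul_prod_rpow_le_sum_mul {μ t : V → ℝ} (hμ : ∀ x, 0 ≤ μ x) (ht : ∀ x, 0 < t x)
    (hprod : ∏ x, t x = 1) :
    Fintype.card V * (∏ x, μ x) ^ ((1 : ℝ) / Fintype.card V) ≤ ∑ x, μ x * t x := by
  have hn : (0 : ℝ) < Fintype.card V := by exact_mod_cast Fintype.card_pos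
  have hmt : ∀ x ∈ univ, 0 ≤ μ x * t x := fun x _ => mul_nonneg (hμ x) (ht x).le
  have amgm := geom_mean_le_arith_mean_weighted univ (fun _ => 1 / (Fintype.card V : ℝ))
    (fun x => μ x * t x) (fun _ _ => by positivity)
    (by rw [sum_const, card_univ, nsmul_eq_mul]; field_simp) hmt
  rw [finsetProd_rpow _ _ hmt, prod_mul_distrib, hprod, mul_one, ← mul_sum] at amgm
  calc _ ≤ Fintype.card V * (1 / Fintype.card V * ∑ x, μ x * t x) := by gcongr
    _ = _ := by field_simp

/-- The witness `t x = g / (μ x + δ)` is the equality case of AM–GM for the weights `μ + δ`. -/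
lemma exists_prod_eq_one_sum_mul_le {μ : V → ℝ} (hμ : ∀ x, 0 ≤ μ x) {δ : ℝ} (hδ : 0 < δ) :
    ∃ t : V → ℝ, (∀ x, 0 < t x) ∧ ∏ x, t x = 1 ∧
      ∑ x, μ x * t x ≤ Fintype.card V * (∏ x, (μ x + δ)) ^ ((1 : ℝ) / Fintype.card V) := by
  have hμδ : ∀ x, 0 < μ x + δ := fun x => by linarith [hμ x]
  set P := ∏ x, (μ x + δ)
  have hP : 0 < P := prod_pos fun x _ => hμδ x
  set g := P ^ ((1 : ℝ) / Fintype.card V)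
  have hg : 0 < g := rpow_pos_of_pos hP _
  have hgpow : g ^ Fintype.card V = P := by
    rw [← rpow_natCast, ← rpow_mul hP.le, one_div_mul_cancel (by simp), rpow_one]
  refine ⟨fun x => g / (μ x + δ), fun x => div_pos hg (hμδ x), ?_, ?_⟩
  · rw [prod_div_distrib, prod_const, card_univ, hgpow, div_self hP.ne']
  · calc ∑ x, μ x * (g / (μ x + δ)) ≤ ∑ _x : V, g := sum_le_sum fun x _ => by
          rw [mul_div_assoc', div_le_iff₀ (hμδ x)]
          nlinarith [hμ x]
      _ = _ := by rw [sum_const, card_univ, nsmul_eq_mul]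

lemma isGLB_sum_mul_of_prod_eq_one {μ : V → ℝ} (hμ : ∀ x, 0 ≤ μ x) :
    IsGLB {s | ∃ t : V → ℝ, (∀ x, 0 < t x) ∧ ∏ x, t x = 1 ∧ ∑ x, μ x * t x = s}
      (Fintype.card V * (∏ x, μ x) ^ ((1 : ℝ) / Fintype.card V)) := by
  refine ⟨?_, fun b hb => ?_⟩
  · rintro _ ⟨t, ht, hprod, rfl⟩
    exact card_mul_prod_rpow_le_sum_mul hμ ht hprod
  have hbound : ∀ δ > 0, b ≤ Fintype.card V * (∏ x, (μ x + δ)) ^ ((1 : ℝ) / Fintype.card V) :=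
    fun δ hδ => by
      obtain ⟨t, ht, hprod, hle⟩ := exists_prod_eq_one_sum_mul_le hμ hδ
      exact (hb ⟨t, ht, hprod, rfl⟩).trans hle
  have hcont : ContinuousAt
      (fun δ : ℝ => Fintype.card V * (∏ x, (μ x + δ)) ^ ((1 : ℝ) / Fintype.card V)) 0 :=
    continuousAt_const.mul (ContinuousAt.rpow_const (by fun_prop) (Or.inr (by positivity)))
  have hlim := (hcont.tendsto.mono_left (nhdsWithin_le_nhds (s := Set.Ioi 0)))
  simp only [add_zero] at hlim
  exact ge_of_tendsto hlim (eventually_mem_nhdsWithin.mono hbound)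

theorem DV_permRate_eq [DecidableEq V] {σ : Equiv.Perm V} (hσ : RatiosSurjective σ) {μ : V → ℝ}
    (hμ0 : ∀ x, 0 ≤ μ x) (hμ1 : ∑ x, μ x = 1) :
    DV (permRate σ) μ = 1 - Fintype.card V * (∏ x, μ x) ^ ((1 : ℝ) / Fintype.card V) := by
  have hglb := isGLB_sum_mul_of_prod_eq_one hμ0
  have : Nonempty {u : V → ℝ // ∀ x, 0 < u x} := ⟨⟨fun _ => 1, fun _ => one_pos⟩⟩
  refine ciSup_eq_of_forall_le_of_forall_lt_exists_gt (fun ⟨u, hu⟩ => ?_) (fun w hw => ?_)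
  · rw [neg_sum_permRate_generator_div σ hμ1 hu, sub_le_sub_iff_left]
    exact hglb.1 ⟨fun x => u (σ x) / u x, fun x => div_pos (hu _) (hu x),
      by rw [prod_div_distrib, Equiv.prod_comp σ, div_self (prod_pos fun x _ => hu x).ne'], rfl⟩
  · obtain ⟨_, ⟨t, ht, hprod, rfl⟩, -, hlt⟩ := hglb.exists_between (by linarith : _ < 1 - w)
    obtain ⟨u, hu, hut⟩ := hσ t ht hprod
    refine ⟨⟨u, hu⟩, ?_⟩
    rw [neg_sum_permRate_generator_div σ hμ1 hu]
    simp only [hut]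
    linarith

lemma Rfwd_eq_permRate : Rfwd = permRate (finRotate 3) := by
  ext x y
  fin_cases x <;> fin_cases y <;> simp [Rfwd, permRate]

lemma Rbwd_eq_permRate : Rbwd = permRate (finRotate 3).symm := by
  ext x y
  fin_cases x <;> fin_cases y <;> simp [Rbwd, permRate] <;> decide

theorem stmt_12 (μ : Fin 3 → ℝ) (hμ0 : ∀ x, 0 ≤ μ x) (hμ1 : ∑ x, μ x = 1) :
    DV Rfwd μ = 1 - 3 * (μ 0 * μ 1 * μ 2) ^ ((1 : ℝ) / 3) ∧
    DV Rbwd μ = DV Rfwd μ := by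
  have hcyclic : ∀ σ : Equiv.Perm (Fin 3), RatiosSurjective σ →
      DV (permRate σ) μ = 1 - 3 * (μ 0 * μ 1 * μ 2) ^ ((1 : ℝ) / 3) := fun σ hσ => by
    rw [DV_permRate_eq hσ hμ0 hμ1, Fin.prod_univ_three, Fintype.card_fin]
    norm_num
  rw [Rfwd_eq_permRate, Rbwd_eq_permRate, hcyclic _ ratiosSurjective_finRotate_three,
    hcyclic _ ratiosSurjective_finRotate_three.symm]
  exact ⟨rfl, rfl⟩
end

section
/- For any continuous-time Markov chain with generator ℒ on a finite set V and any function H : V → ℝ, the identity Σ_{x,y} μ(x)R(x,y)(1 − e^{H(y)−H(x)}) = Σ_{x,y} μ(x)R(x,y)·((H(y)−H(x))e^{H(y)−H(x)} − e^{H(y)−H(x)} + 1) holds whenever μ is stationary for the tilted generator ℒ_H; moreover each summand ((H(y)−H(x))e^{H(y)−H(x)} − e^{H(y)−H(x)} + 1) is nonnegative, since t·e^t − e^t + 1 ≥ 0 for all real t. -/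
open Real

lemma Real.mul_exp_sub_exp_add_one_nonneg (t : ℝ) : 0 ≤ t * exp t - exp t + 1 :=
  calc 0 ≤ exp t * (exp (-t) - (-t + 1)) :=
        mul_nonneg (exp_pos t).le (sub_nonneg.2 (add_one_le_exp _))
    _ = t * exp t - exp t + 1 := by
        rw [mul_sub, ← exp_add, add_neg_cancel, exp_zero]; ring

theorem stmt_18_general {V : Type*} [Fintype V]
    (R : V → V → ℝ)
    (μ : V → ℝ)
    (H : V → ℝ)
    -- μ is stationary for the tilted rates `R_H(x,y) = R(x,y) e^{H(y)−H(x)}`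
    (hstat : ∀ g : V → ℝ,
      ∑ x, ∑ y, μ x * (R x y * Real.exp (H y - H x)) * (g y - g x) = 0) :
    (∑ x, ∑ y, μ x * R x y * (1 - Real.exp (H y - H x))
      = ∑ x, ∑ y, μ x * R x y *
          ((H y - H x) * Real.exp (H y - H x) - Real.exp (H y - H x) + 1)) ∧
    (∀ x y : V,
      0 ≤ (H y - H x) * Real.exp (H y - H x) - Real.exp (H y - H x) + 1) := by
  refine ⟨?_, fun x y => mul_exp_sub_exp_add_one_nonneg _⟩
  -- The summands differ by `μ(x) R_H(x,y) (H y - H x)`, whose sum vanishes by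
  -- stationarity tested on `g = H`.
  have split : ∀ x y : V, μ x * R x y *
      ((H y - H x) * exp (H y - H x) - exp (H y - H x) + 1)
      = μ x * R x y * (1 - exp (H y - H x))
        + μ x * (R x y * exp (H y - H x)) * (H y - H x) := fun x y => by ring
  simp only [split, Finset.sum_add_distrib, hstat H, add_zero]

theorem stmt_18 {V : Type*} [Fintype V]
    (R : V → V → ℝ) (hR : ∀ x y, 0 ≤ R x y)
    (μ : V → ℝ) (hμ0 : ∀ x, 0 ≤ μ x) (hμ1 : ∑ x, μ x = 1)
    (H : V → ℝ)
    -- μ is stationary for the tilted rates `R_H(x,y) = R(x,y) e^{H(y)−H(x)}`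
    (hstat : ∀ g : V → ℝ,
      ∑ x, ∑ y, μ x * (R x y * Real.exp (H y - H x)) * (g y - g x) = 0) :
    (∑ x, ∑ y, μ x * R x y * (1 - Real.exp (H y - H x))
      = ∑ x, ∑ y, μ x * R x y *
          ((H y - H x) * Real.exp (H y - H x) - Real.exp (H y - H x) + 1)) ∧
    (∀ x y : V,
      0 ≤ (H y - H x) * Real.exp (H y - H x) - Real.exp (H y - H x) + 1) :=
  stmt_18_general R μ H hstat
end
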